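/- arXiv:1509.04160 — 5 statements merged into one kernel-verified Lean document; each statement's English description precedes it below -/
import Mathlib

section
/- If V and W are closed subspaces of a Hilbert space H with max{δ(V,W), δ(W,V)} < 1, then δ(V,W) = δ(W,V), and the operators P_W|V : V → W and P_V|W : W → V are isomorphisms (bounded bijections with bounded inverses). -/
/-!
Let `T = P_W|V : V → W` and `δ = δ(V, W)`. Pythagoras gives `‖T v‖² = ‖v‖² - ‖P_{W⊥} v‖² ≥
(1 - δ²) ‖v‖²`, so for `δ < 1` the map `T` is bounded below: injective with closed range. Its
adjoint is `P_V|W`, injective by the same argument when `δ(W, V) < 1`, so `T` is also onto.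
For a surjective adjoint, a lower bound on the adjoint passes to the operator itself; applied to
`P_V|W = T†`, this makes `√(1 - δ(W, V)²)` a lower bound for `T`, which by Pythagoras again
means `δ(V, W) ≤ δ(W, V)`.
-/

/-- The orthogonal projection of `H` onto a complete subspace `W`, viewed as an
operator `H →L[ℂ] H`. -/
noncomputable def proj {H : Type*} [NormedAddCommGroup H] [InnerProductSpace ℂ H]
    (W : Submodule ℂ H) [CompleteSpace W] : H →L[ℂ] H :=
  W.subtypeL.comp (Submodule.orthogonalProjectionOnto W)

open Submodule
open scoped InnerProduct InnerProductSpace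

namespace ContinuousLinearMap

variable {𝕜 E F : Type*} [RCLike 𝕜] [NormedAddCommGroup E] [InnerProductSpace 𝕜 E]
  [NormedAddCommGroup F] [InnerProductSpace 𝕜 F] [CompleteSpace E] [CompleteSpace F]

/-- Writing `x = (T†) y`, we get `‖x‖² = re ⟪T x, y⟫ ≤ ‖T x‖ ‖y‖ ≤ ‖T x‖ ‖x‖ / c`. -/
theorem mul_norm_le_norm_apply_of_adjoint (T : E →L[𝕜] F) (hsurj : Function.Surjective (T†))
    {c : ℝ} (hc : ∀ y, c * ‖y‖ ≤ ‖(T†) y‖) (x : E) : c * ‖x‖ ≤ ‖T x‖ := by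
  rcases le_or_gt c 0 with hc0 | hc0
  · exact (mul_nonpos_of_nonpos_of_nonneg hc0 (norm_nonneg x)).trans (norm_nonneg _)
  obtain ⟨y, rfl⟩ := hsurj x
  have hsq : ‖(T†) y‖ ^ 2 ≤ ‖T ((T†) y)‖ * ‖y‖ := by
    calc ‖(T†) y‖ ^ 2 = RCLike.re ⟪(T†) y, (T†) y⟫_𝕜 := (inner_self_eq_norm_sq _).symm
      _ = RCLike.re ⟪T ((T†) y), y⟫_𝕜 := by rw [adjoint_inner_right]
      _ ≤ ‖T ((T†) y)‖ * ‖y‖ := re_inner_le_norm _ _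
  rcases (norm_nonneg ((T†) y)).eq_or_lt with hx | hx
  · rw [← hx, mul_zero]
    exact norm_nonneg _
  refine le_of_mul_le_mul_right ?_ hx
  calc c * ‖(T†) y‖ * ‖(T†) y‖ ≤ c * (‖T ((T†) y)‖ * ‖y‖) := by
        rw [mul_assoc, ← sq]
        exact mul_le_mul_of_nonneg_left hsq hc0.le
    _ = ‖T ((T†) y)‖ * (c * ‖y‖) := by ring
    _ ≤ ‖T ((T†) y)‖ * ‖(T†) y‖ := mul_le_mul_of_nonneg_left (hc y) (norm_nonneg _)

theorem surjective_of_antilipschitz_of_injective_adjoint (T : E →L[𝕜] F) {K : NNReal}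
    (hT : AntilipschitzWith K T) (hadj : Function.Injective (T†)) : Function.Surjective T := by
  have : CompleteSpace T.range := (hT.isClosed_range T.uniformContinuous).completeSpace_coe
  refine LinearMap.range_eq_top.mp ?_
  rw [← Submodule.orthogonal_eq_bot_iff, orthogonal_range]
  exact LinearMap.ker_eq_bot.mpr hadj

end ContinuousLinearMap

section RestrictedProjection

variable {H : Type*} [NormedAddCommGroup H] [InnerProductSpace ℂ H]
  (V W : Submodule ℂ H)

theorem adjoint_orthogonalProjectionOnto_comp_subtypeL [CompleteSpace V] [CompleteSpace W] :
    (W.orthogonalProjectionOnto ∘L V.subtypeL)† = V.orthogonalProjectionOnto ∘L W.subtypeL := by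
  refine ((ContinuousLinearMap.eq_adjoint_iff _ _).mpr fun w v => ?_).symm
  simp

variable [CompleteSpace H]

noncomputable def gap : ℝ := ‖proj Wᗮ ∘L V.subtypeL‖

theorem gap_nonneg : 0 ≤ gap V W := ContinuousLinearMap.opNorm_nonneg _

variable [CompleteSpace W]

theorem norm_sq_orthogonalProjectionOnto_add_norm_sq_proj_orthogonal (x : H) :
    ‖W.orthogonalProjectionOnto x‖ ^ 2 + ‖proj Wᗮ x‖ ^ 2 = ‖x‖ ^ 2 :=
  (norm_sq_eq_add_norm_sq_projection x W).symm

theorem sqrt_one_sub_gap_sq_mul_norm_le (v : V) :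
    √(1 - gap V W ^ 2) * ‖v‖ ≤ ‖(W.orthogonalProjectionOnto ∘L V.subtypeL) v‖ := by
  have hsplit := norm_sq_orthogonalProjectionOnto_add_norm_sq_proj_orthogonal W (v : H)
  rw [norm_coe] at hsplit
  have hgap : ‖proj Wᗮ v‖ ≤ gap V W * ‖v‖ := (proj Wᗮ ∘L V.subtypeL).le_opNorm v
  have hsq : (1 - gap V W ^ 2) * ‖v‖ ^ 2
      ≤ ‖(W.orthogonalProjectionOnto ∘L V.subtypeL) v‖ ^ 2 := by
    change _ ≤ ‖W.orthogonalProjectionOnto (v : H)‖ ^ 2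
    nlinarith [pow_le_pow_left₀ (norm_nonneg _) hgap 2, norm_nonneg v]
  simpa [Real.sqrt_mul', Real.sqrt_sq] using Real.sqrt_le_sqrt hsq

theorem gap_le_of_sqrt_one_sub_sq_mul_norm_le {d : ℝ} (hd : 0 ≤ d) (hd1 : d ≤ 1)
    (h : ∀ v : V, √(1 - d ^ 2) * ‖v‖ ≤ ‖(W.orthogonalProjectionOnto ∘L V.subtypeL) v‖) :
    gap V W ≤ d := by
  refine ContinuousLinearMap.opNorm_le_bound _ hd fun v => ?_
  have hsplit := norm_sq_orthogonalProjectionOnto_add_norm_sq_proj_orthogonal W (v : H)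
  rw [norm_coe] at hsplit
  have hsq := pow_le_pow_left₀ (by positivity) (h v) 2
  rw [mul_pow, Real.sq_sqrt (by nlinarith)] at hsq
  change (1 - d ^ 2) * ‖v‖ ^ 2 ≤ ‖W.orthogonalProjectionOnto (v : H)‖ ^ 2 at hsq
  refine (pow_le_pow_iff_left₀ (norm_nonneg _) (by positivity) two_ne_zero).mp ?_
  change ‖proj Wᗮ (v : H)‖ ^ 2 ≤ _
  rw [mul_pow]
  linarith

theorem antilipschitz_orthogonalProjectionOnto_comp_subtypeL (h : gap V W < 1) :
    AntilipschitzWith (√(1 - gap V W ^ 2))⁻¹.toNNReal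
      (W.orthogonalProjectionOnto ∘L V.subtypeL) := by
  have hpos : 0 < √(1 - gap V W ^ 2) :=
    Real.sqrt_pos.mpr (by nlinarith [gap_nonneg V W])
  refine ContinuousLinearMap.antilipschitz_of_bound _ fun v => ?_
  rw [Real.coe_toNNReal _ (inv_nonneg.mpr hpos.le), inv_mul_eq_div, le_div_iff₀ hpos, mul_comm]
  exact sqrt_one_sub_gap_sq_mul_norm_le V W v

variable [CompleteSpace V]

theorem bijective_orthogonalProjectionOnto_comp_subtypeL (hVW : gap V W < 1) (hWV : gap W V < 1) :
    Function.Bijective (W.orthogonalProjectionOnto ∘L V.subtypeL) := by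
  have hT := antilipschitz_orthogonalProjectionOnto_comp_subtypeL V W hVW
  refine ⟨hT.injective, (W.orthogonalProjectionOnto ∘L V.subtypeL)
    |>.surjective_of_antilipschitz_of_injective_adjoint hT ?_⟩
  rw [adjoint_orthogonalProjectionOnto_comp_subtypeL]
  exact (antilipschitz_orthogonalProjectionOnto_comp_subtypeL W V hWV).injective

theorem gap_le_gap_of_lt_one (hVW : gap V W < 1) (hWV : gap W V < 1) : gap V W ≤ gap W V := by
  refine gap_le_of_sqrt_one_sub_sq_mul_norm_le V W (gap_nonneg W V) hWV.le fun v => ?_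
  refine ContinuousLinearMap.mul_norm_le_norm_apply_of_adjoint _ ?_ (fun w => ?_) v
  all_goals rw [adjoint_orthogonalProjectionOnto_comp_subtypeL]
  · exact (bijective_orthogonalProjectionOnto_comp_subtypeL W V hWV hVW).surjective
  · exact sqrt_one_sub_gap_sq_mul_norm_le W V w

end RestrictedProjection

/-- If `Δ(V,W) = max{δ(V,W), δ(W,V)} < 1`, then `δ(V,W) = δ(W,V)` and the operators
`P_W|V : V → W` and `P_V|W : W → V` are isomorphisms. -/
theorem gap_eq_and_bijective_of_maxGap_lt_one
    {H : Type*} [NormedAddCommGroup H] [InnerProductSpace ℂ H]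
    [CompleteSpace H] (V W : Submodule ℂ H) [CompleteSpace V] [CompleteSpace W]
    (hgap : max ‖(proj Wᗮ).comp V.subtypeL‖ ‖(proj Vᗮ).comp W.subtypeL‖ < 1) :
    ‖(proj Wᗮ).comp V.subtypeL‖ = ‖(proj Vᗮ).comp W.subtypeL‖ ∧
    Function.Bijective ((Submodule.orthogonalProjectionOnto W).comp V.subtypeL) ∧
    Function.Bijective ((Submodule.orthogonalProjectionOnto V).comp W.subtypeL) := by
  obtain ⟨hVW, hWV⟩ := max_lt_iff.mp hgap
  exact ⟨(gap_le_gap_of_lt_one V W hVW hWV).antisymm (gap_le_gap_of_lt_one W V hWV hVW),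
    bijective_orthogonalProjectionOnto_comp_subtypeL V W hVW hWV,
    bijective_orthogonalProjectionOnto_comp_subtypeL W V hWV hVW⟩
end

section
/- Let X, Y be Hilbert spaces and T, S ∈ B(X,Y). If there exists c > 0 such that ‖Tx‖ ≥ c‖x‖ for all x ∈ (ker T)^⊥, then ran T is closed and the gap from ran T to the closure of ran S satisfies δ(ran T, cl(ran S)) ≤ ‖T - S‖/c. -/
/-!
Every vector of `ran T` is `T x` for the orthogonal projection `x` of any preimage onto
`(ker T)ᗮ`, so `T` restricted to `(ker T)ᗮ` has the same range and, being bounded below by `c`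
on a complete space, a closed one. For a unit vector `y = T x` with `x ∈ (ker T)ᗮ` we get
`‖x‖ ≤ 1 / c`, and `S x` is a point of `ran S` at distance `‖(T - S) x‖ ≤ ‖T - S‖ / c` from `y`.
-/

open Metric

namespace ContinuousLinearMap

variable {𝕜 E F : Type*} [RCLike 𝕜] [NormedAddCommGroup E] [InnerProductSpace 𝕜 E]
  [NormedAddCommGroup F] [NormedSpace 𝕜 F]

theorem infDist_apply_closure_range_le (T S : E →L[𝕜] F) (x : E) :
    infDist (T x) (closure (Set.range S)) ≤ ‖T - S‖ * ‖x‖ := by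
  rw [infDist_closure]
  calc infDist (T x) (Set.range S) ≤ dist (T x) (S x) := infDist_le_dist_of_mem ⟨x, rfl⟩
    _ = ‖(T - S) x‖ := by rw [dist_eq_norm, sub_apply]
    _ ≤ ‖T - S‖ * ‖x‖ := (T - S).le_opNorm x

variable [CompleteSpace E]

theorem apply_starProjection_orthogonal_ker (T : E →L[𝕜] F) (x : E) :
    T ((LinearMap.ker (T : E →ₗ[𝕜] F))ᗮ.starProjection x) = T x := by
  have : CompleteSpace (LinearMap.ker (T : E →ₗ[𝕜] F)) := T.isClosed_ker.completeSpace_coe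
  have hker :
      x - (LinearMap.ker (T : E →ₗ[𝕜] F))ᗮ.starProjection x ∈ LinearMap.ker (T : E →ₗ[𝕜] F) :=
    (Submodule.orthogonal_orthogonal _).le (Submodule.sub_starProjection_mem_orthogonal x)
  rw [LinearMap.mem_ker, coe_coe, map_sub, sub_eq_zero] at hker
  exact hker.symm

theorem image_orthogonal_ker (T : E →L[𝕜] F) :
    T '' ((LinearMap.ker (T : E →ₗ[𝕜] F))ᗮ : Set E) = Set.range T := by
  refine (Set.image_subset_range _ _).antisymm ?_
  rintro _ ⟨x, rfl⟩
  exact ⟨_, Submodule.starProjection_apply_mem _ x, T.apply_starProjection_orthogonal_ker x⟩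

variable {T : E →L[𝕜] F} {c : ℝ}

theorem isClosed_range_of_le_norm_apply_orthogonal_ker (hc : 0 < c)
    (hbelow : ∀ x ∈ (LinearMap.ker (T : E →ₗ[𝕜] F))ᗮ, c * ‖x‖ ≤ ‖T x‖) :
    IsClosed (Set.range T) := by
  set K := (LinearMap.ker (T : E →ₗ[𝕜] F))ᗮ
  have hanti : AntilipschitzWith (⟨c, hc.le⟩ : NNReal)⁻¹ (T.comp K.subtypeL) :=
    (T.comp K.subtypeL).antilipschitz_of_bound fun x ↦ by
      change ‖x‖ ≤ c⁻¹ * ‖T x‖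
      rw [inv_mul_eq_div, le_div_iff₀' hc]
      exact hbelow x x.2
  have hrange : Set.range (T.comp K.subtypeL) = Set.range T := by
    rw [coe_comp, Set.range_comp, Submodule.coe_subtypeL, Submodule.coe_subtype, Subtype.range_coe]
    exact T.image_orthogonal_ker
  exact hrange ▸ hanti.isClosed_range (T.comp K.subtypeL).uniformContinuous

theorem exists_apply_eq_norm_le_of_le_norm_apply_orthogonal_ker (hc : 0 < c)
    (hbelow : ∀ x ∈ (LinearMap.ker (T : E →ₗ[𝕜] F))ᗮ, c * ‖x‖ ≤ ‖T x‖)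
    {y : F} (hy : y ∈ Set.range T) :
    ∃ x, T x = y ∧ ‖x‖ ≤ ‖y‖ / c := by
  obtain ⟨x, hxK, rfl⟩ := T.image_orthogonal_ker.symm ▸ hy
  exact ⟨x, rfl, (le_div_iff₀' hc).2 (hbelow x hxK)⟩

end ContinuousLinearMap

theorem range_closed_and_gap_le_general {X Y : Type*}
    [NormedAddCommGroup X] [InnerProductSpace ℂ X] [CompleteSpace X]
    [NormedAddCommGroup Y] [InnerProductSpace ℂ Y]
    (T S : X →L[ℂ] Y) (c : ℝ) (hc : 0 < c)
    (hbelow : ∀ x ∈ (LinearMap.ker (T : X →ₗ[ℂ] Y))ᗮ, c * ‖x‖ ≤ ‖T x‖) :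
    IsClosed (Set.range T) ∧
    ∀ y ∈ Set.range T, ‖y‖ = 1 →
      Metric.infDist y (closure (Set.range S)) ≤ ‖T - S‖ / c := by
  refine ⟨T.isClosed_range_of_le_norm_apply_orthogonal_ker hc hbelow, fun y hy hy1 ↦ ?_⟩
  obtain ⟨x, rfl, hx⟩ :=
    T.exists_apply_eq_norm_le_of_le_norm_apply_orthogonal_ker hc hbelow hy
  calc infDist (T x) (closure (Set.range S)) ≤ ‖T - S‖ * ‖x‖ :=
        T.infDist_apply_closure_range_le S x
    _ ≤ ‖T - S‖ * (1 / c) := by gcongr; rwa [hy1] at hx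
    _ = ‖T - S‖ / c := mul_one_div _ _

/-- If `T, S ∈ B(X,Y)` and `‖Tx‖ ≥ c‖x‖` for all `x ∈ (ker T)ᗮ` (with `c > 0`), then
`ran T` is closed and the gap from `ran T` to the closure of `ran S` satisfies
`δ(ran T, cl ran S) = sup{dist(v, cl ran S) : v ∈ ran T, ‖v‖ = 1} ≤ ‖T - S‖ / c`. -/
theorem range_closed_and_gap_le {X Y : Type*}
    [NormedAddCommGroup X] [InnerProductSpace ℂ X] [CompleteSpace X]
    [NormedAddCommGroup Y] [InnerProductSpace ℂ Y] [CompleteSpace Y]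
    (T S : X →L[ℂ] Y) (c : ℝ) (hc : 0 < c)
    (hbelow : ∀ x ∈ (LinearMap.ker (T : X →ₗ[ℂ] Y))ᗮ, c * ‖x‖ ≤ ‖T x‖) :
    IsClosed (Set.range T) ∧
    ∀ y ∈ Set.range T, ‖y‖ = 1 →
      Metric.infDist y (closure (Set.range S)) ≤ ‖T - S‖ / c :=
  range_closed_and_gap_le_general T S c hc hbelow
end

section
/- Let P and Q be orthogonal projections on a Hilbert space H and c, d > 0. Then ‖P - Q‖ ≤ √(1/c² + 1/d²) · ‖cP - dQ‖. -/
/-!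
Write `A = cP - dQ`. Since `P` and `Q` are idempotent, `A (1 - Q) = c P (P - Q)` and
`(1 - P) A = d (1 - P)(P - Q)`, and `1 - P`, `1 - Q` are orthogonal projections, hence
contractions. So `‖P (P - Q)‖ ≤ ‖A‖ / c` and `‖(1 - P)(P - Q)‖ ≤ ‖A‖ / d`, and by Pythagoras
for the splitting `P + (1 - P) = 1`, `‖P - Q‖² ≤ ‖P (P - Q)‖² + ‖(1 - P)(P - Q)‖²`.
-/

section Ring

variable {S R : Type*} [Monoid S] [Ring R] [DistribMulAction S R] {P Q : R}

theorem IsIdempotentElem.smul_sub_smul_mul_one_sub [IsScalarTower S R R]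
    (hP : IsIdempotentElem P) (hQ : IsIdempotentElem Q) (c d : S) :
    (c • P - d • Q) * (1 - Q) = c • (P * (P - Q)) := by
  rw [sub_mul, smul_mul_assoc, smul_mul_assoc, hQ.mul_one_sub_self, smul_zero, sub_zero,
    mul_sub, mul_sub, mul_one, hP.eq]

theorem IsIdempotentElem.one_sub_mul_smul_sub_smul [SMulCommClass S R R]
    (hP : IsIdempotentElem P) (c d : S) :
    (1 - P) * (c • P - d • Q) = d • ((1 - P) * (P - Q)) := by
  rw [mul_sub, mul_smul_comm, mul_smul_comm, hP.one_sub_mul_self, smul_zero, zero_sub,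
    mul_sub, hP.one_sub_mul_self, zero_sub, smul_neg]

end Ring

theorem Real.sqrt_sq_add_sq_le_of_mul_le {a b c d M : ℝ} (ha : 0 ≤ a) (hb : 0 ≤ b)
    (hc : 0 < c) (hd : 0 < d) (hca : c * a ≤ M) (hdb : d * b ≤ M) :
    √(a ^ 2 + b ^ 2) ≤ √(1 / c ^ 2 + 1 / d ^ 2) * M := by
  have hM : 0 ≤ M := (mul_nonneg hc.le ha).trans hca
  have hac : a ≤ M / c := by rwa [le_div_iff₀ hc, mul_comm]
  have hbd : b ≤ M / d := by rwa [le_div_iff₀ hd, mul_comm]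
  rw [← Real.sqrt_sq hM, ← Real.sqrt_mul (by positivity)]
  apply Real.sqrt_le_sqrt
  calc a ^ 2 + b ^ 2 ≤ (M / c) ^ 2 + (M / d) ^ 2 := by gcongr
    _ = (1 / c ^ 2 + 1 / d ^ 2) * M ^ 2 := by ring

namespace IsStarProjection

variable {𝕜 E F : Type*} [RCLike 𝕜] [NormedAddCommGroup E] [InnerProductSpace 𝕜 E]
  [CompleteSpace E] [NormedAddCommGroup F] [NormedSpace 𝕜 F] {p : E →L[𝕜] E}

theorem norm_sq_apply_add_norm_sq_one_sub_apply (hp : IsStarProjection p) (x : E) :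
    ‖p x‖ ^ 2 + ‖(1 - p) x‖ ^ 2 = ‖x‖ ^ 2 := by
  obtain ⟨K, _, rfl⟩ := isStarProjection_iff_eq_starProjection.mp hp
  rw [← K.starProjection_orthogonal', K.norm_sq_eq_add_norm_sq_starProjection x]

theorem norm_le_sqrt_norm_comp_sq_add_norm_one_sub_comp_sq (hp : IsStarProjection p)
    (T : F →L[𝕜] E) : ‖T‖ ≤ √(‖p ∘L T‖ ^ 2 + ‖(1 - p) ∘L T‖ ^ 2) := by
  refine T.opNorm_le_bound (by positivity) fun x => ?_
  have hpT : ‖p (T x)‖ ≤ ‖p ∘L T‖ * ‖x‖ := (p ∘L T).le_opNorm x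
  have hqT : ‖(1 - p) (T x)‖ ≤ ‖(1 - p) ∘L T‖ * ‖x‖ := ((1 - p) ∘L T).le_opNorm x
  rw [← Real.sqrt_sq (norm_nonneg (T x)), ← hp.norm_sq_apply_add_norm_sq_one_sub_apply,
    ← Real.sqrt_sq (norm_nonneg x), ← Real.sqrt_mul (by positivity)]
  apply Real.sqrt_le_sqrt
  calc ‖p (T x)‖ ^ 2 + ‖(1 - p) (T x)‖ ^ 2
      ≤ (‖p ∘L T‖ * ‖x‖) ^ 2 + (‖(1 - p) ∘L T‖ * ‖x‖) ^ 2 := by gcongr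
    _ = (‖p ∘L T‖ ^ 2 + ‖(1 - p) ∘L T‖ ^ 2) * ‖x‖ ^ 2 := by ring

end IsStarProjection

/-- If `P` and `Q` are orthogonal projections (self-adjoint idempotents) on a Hilbert
space `H` and `c, d > 0`, then `‖P - Q‖ ≤ √(1/c² + 1/d²) · ‖cP - dQ‖`. -/
theorem norm_sub_proj_le {H : Type*} [NormedAddCommGroup H] [InnerProductSpace ℂ H]
    [CompleteSpace H] (P Q : H →L[ℂ] H)
    (hP1 : IsIdempotentElem P) (hP2 : IsSelfAdjoint P)
    (hQ1 : IsIdempotentElem Q) (hQ2 : IsSelfAdjoint Q)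
    (c d : ℝ) (hc : 0 < c) (hd : 0 < d) :
    ‖P - Q‖ ≤ Real.sqrt (1 / c ^ 2 + 1 / d ^ 2) * ‖(c : ℂ) • P - (d : ℂ) • Q‖ := by
  have hP : IsStarProjection P := ⟨hP1, hP2⟩
  have hQ : IsStarProjection Q := ⟨hQ1, hQ2⟩
  set A := (c : ℂ) • P - (d : ℂ) • Q
  have hPA : c * ‖P * (P - Q)‖ ≤ ‖A‖ :=
    calc c * ‖P * (P - Q)‖ = ‖A * (1 - Q)‖ := by
          rw [hP1.smul_sub_smul_mul_one_sub hQ1, norm_smul, Complex.norm_of_nonneg hc.le]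
      _ ≤ ‖A‖ * ‖1 - Q‖ := norm_mul_le _ _
      _ ≤ ‖A‖ := mul_le_of_le_one_right (norm_nonneg _) (hQ.one_sub.norm_le _)
  have hQA : d * ‖(1 - P) * (P - Q)‖ ≤ ‖A‖ :=
    calc d * ‖(1 - P) * (P - Q)‖ = ‖(1 - P) * A‖ := by
          rw [hP1.one_sub_mul_smul_sub_smul, norm_smul, Complex.norm_of_nonneg hd.le]
      _ ≤ ‖1 - P‖ * ‖A‖ := norm_mul_le _ _
      _ ≤ ‖A‖ := mul_le_of_le_one_left (norm_nonneg _) (hP.one_sub.norm_le _)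
  calc ‖P - Q‖ ≤ √(‖P * (P - Q)‖ ^ 2 + ‖(1 - P) * (P - Q)‖ ^ 2) :=
        hP.norm_le_sqrt_norm_comp_sq_add_norm_one_sub_comp_sq _
    _ ≤ √(1 / c ^ 2 + 1 / d ^ 2) * ‖A‖ :=
        Real.sqrt_sq_add_sq_le_of_mul_le (norm_nonneg _) (norm_nonneg _) hc hd hPA hQA
end

section
/- Let A = (A_i)_{i∈I} be an operator-valued frame sequence in B(H,K) with frame operator S_A and H_A = closed span of ⋃ ran A_i*. Then the set of dual analysis operators D(A) = {T ∈ B(H, ℓ²(I,K)) : T* T_A = P_A, ran T* ⊂ H_A} equals {(T_A (S_A|H_A)^{-1} + L) P_A : L ∈ B(H_A, ℓ²(I,K)), L* T_A = 0}. -/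
/-
Everything reduces to operator identities. With `P = P_A` and `G = (S_A|H_A)⁻¹ P_A`, taking
adjoints in `T_A* T_A G = P` gives `G* T_A* T_A = P`, and `G` vanishing on `H_Aᗮ` means
`G P = G`; the condition `ran T* ⊂ H_A` is equivalent to `T P = T`. For a dual `T`, the
operator `L = (T - T_A G)|_{H_A}` satisfies `L* T_A = P - P = 0` and `T = T_A G + L P`.
Conversely, `(T_A G + L P)* T_A = G* T_A* T_A + L* T_A = P`, and `T_A G + L P` is unchanged
by composing with `P` on the right.
-/

open ContinuousLinearMap

namespace Submodule

variable {𝕜 H E : Type*} [RCLike 𝕜]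
  [NormedAddCommGroup H] [InnerProductSpace 𝕜 H] [NormedAddCommGroup E] [InnerProductSpace 𝕜 E]
  {V : Submodule 𝕜 H} [V.HasOrthogonalProjection]

theorem comp_starProjection_eq_self_iff {S : H →L[𝕜] E} :
    S ∘L V.starProjection = S ↔ ∀ x ∈ Vᗮ, S x = 0 := by
  constructor
  · intro hS x hx
    rw [← hS, comp_apply, V.starProjection_apply_eq_zero_iff.2 hx, map_zero]
  · intro hS
    ext x
    have := hS _ (V.sub_starProjection_mem_orthogonal x)
    rwa [map_sub, sub_eq_zero, eq_comm] at this

theorem adjoint_apply_mem_iff_comp_starProjection_eq_self [CompleteSpace H] [CompleteSpace E]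
    {S : H →L[𝕜] E} : (∀ y, adjoint S y ∈ V) ↔ S ∘L V.starProjection = S := by
  have hadj : adjoint (S ∘L V.starProjection) = V.starProjection ∘L adjoint S := by
    rw [adjoint_comp, (isSelfAdjoint_starProjection V).adjoint_eq]
  rw [← adjoint.injective.eq_iff, hadj, ContinuousLinearMap.ext_iff]
  simp only [comp_apply, starProjection_eq_self_iff]

theorem orthogonalProjectionOnto_comp_starProjection :
    V.orthogonalProjectionOnto ∘L V.starProjection = V.orthogonalProjectionOnto := by
  ext x
  exact congrArg Subtype.val (V.orthogonalProjectionOnto_mem_subspace_eq_self _)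

end Submodule

section DualParametrization

variable {𝕜 H E : Type*} [RCLike 𝕜]
  [NormedAddCommGroup H] [InnerProductSpace 𝕜 H] [NormedAddCommGroup E] [InnerProductSpace 𝕜 E]
  {V : Submodule 𝕜 H} [CompleteSpace V] {TA : H →L[𝕜] E} {G : H →L[𝕜] H}

theorem add_comp_orthogonalProjectionOnto_comp_starProjection
    (hGP : G ∘L V.starProjection = G) (L : V →L[𝕜] E) :
    (TA ∘L G + L ∘L V.orthogonalProjectionOnto) ∘L V.starProjection =
      TA ∘L G + L ∘L V.orthogonalProjectionOnto := by
  rw [add_comp, comp_assoc, hGP, comp_assoc, V.orthogonalProjectionOnto_comp_starProjection]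

variable [CompleteSpace H] [CompleteSpace E]

variable (V) in
/-- `T ∈ D(A)`, for the frame sequence with analysis operator `TA` and `V = H_A`. -/
def IsDualAnalysisOperator (TA T : H →L[𝕜] E) : Prop :=
  adjoint T ∘L TA = V.starProjection ∧ ∀ y, adjoint T y ∈ V

theorem adjoint_add_comp_orthogonalProjectionOnto_comp
    (hG : adjoint G ∘L adjoint TA ∘L TA = V.starProjection) {L : V →L[𝕜] E}
    (hL : adjoint L ∘L TA = 0) :
    adjoint (TA ∘L G + L ∘L V.orthogonalProjectionOnto) ∘L TA = V.starProjection := by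
  rw [map_add, add_comp, adjoint_comp, adjoint_comp, V.adjoint_orthogonalProjectionOnto,
    comp_assoc, hG, comp_assoc, hL, comp_zero, add_zero]

theorem exists_eq_add_comp_orthogonalProjectionOnto_of_adjoint_comp_eq
    (hG : adjoint G ∘L adjoint TA ∘L TA = V.starProjection) (hGP : G ∘L V.starProjection = G)
    {T : H →L[𝕜] E} (hT : adjoint T ∘L TA = V.starProjection)
    (hTP : T ∘L V.starProjection = T) :
    ∃ L : V →L[𝕜] E, adjoint L ∘L TA = 0 ∧ T = TA ∘L G + L ∘L V.orthogonalProjectionOnto := by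
  refine ⟨(T - TA ∘L G) ∘L V.subtypeL, ?_, ?_⟩
  · rw [adjoint_comp, V.adjoint_subtypeL, comp_assoc, map_sub, sub_comp, adjoint_comp,
      comp_assoc, hT, hG, sub_self, comp_zero]
  · rw [comp_assoc, ← Submodule.starProjection, sub_comp, hTP, comp_assoc, hGP, add_sub_cancel]

theorem isDualAnalysisOperator_iff_exists
    (hG : adjoint G ∘L adjoint TA ∘L TA = V.starProjection) (hGP : G ∘L V.starProjection = G)
    {T : H →L[𝕜] E} :
    IsDualAnalysisOperator V TA T ↔
      ∃ L : V →L[𝕜] E, adjoint L ∘L TA = 0 ∧ T = TA ∘L G + L ∘L V.orthogonalProjectionOnto := by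
  rw [IsDualAnalysisOperator, Submodule.adjoint_apply_mem_iff_comp_starProjection_eq_self]
  constructor
  · rintro ⟨hT, hTP⟩
    exact exists_eq_add_comp_orthogonalProjectionOnto_of_adjoint_comp_eq hG hGP hT hTP
  · rintro ⟨L, hL, rfl⟩
    exact ⟨adjoint_add_comp_orthogonalProjectionOnto_comp hG hL,
      add_comp_orthogonalProjectionOnto_comp_starProjection hGP L⟩

end DualParametrization

theorem duals_eq_parametrization_general {H K : Type*}
    [NormedAddCommGroup H] [InnerProductSpace ℂ H] [CompleteSpace H]
    [NormedAddCommGroup K] [InnerProductSpace ℂ K] [CompleteSpace K]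
    {I : Type*} (TA : H →L[ℂ] lp (fun _ : I => K) 2)
    (HA : Submodule ℂ H) [CompleteSpace HA]
    (G : H →L[ℂ] H)
    (hGinv : ∀ x : H, (adjoint TA) (TA (G x)) = proj HA x)
    (hGker : ∀ x ∈ HAᗮ, G x = 0) :
    {T : H →L[ℂ] lp (fun _ : I => K) 2 |
        (adjoint T).comp TA = proj HA ∧ ∀ y, adjoint T y ∈ HA} =
    {T : H →L[ℂ] lp (fun _ : I => K) 2 |
        ∃ L : HA →L[ℂ] lp (fun _ : I => K) 2,
          (adjoint L).comp TA = 0 ∧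
          T = TA.comp G + L.comp (Submodule.orthogonalProjectionOnto HA)} := by
  have hG : adjoint G ∘L adjoint TA ∘L TA = HA.starProjection := by
    have h : adjoint TA ∘L TA ∘L G = HA.starProjection := ext hGinv
    simpa only [adjoint_comp, adjoint_adjoint, comp_assoc,
      (isSelfAdjoint_starProjection HA).adjoint_eq] using congr(adjoint $h)
  have hGP : G ∘L HA.starProjection = G := Submodule.comp_starProjection_eq_self_iff.2 hGker
  exact Set.ext fun _ => isDualAnalysisOperator_iff_exists hG hGP

/-- Parametrization of the duals of an operator-valued frame sequence with analysis
operator `T_A`: the set `D(A) = {T : T* T_A = P_A, ran T* ⊂ H_A}` equals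
`{(T_A (S_A|H_A)⁻¹ + L) P_A : L ∈ B(H_A, ℓ²(I,K)), L* T_A = 0}`, where
`G = (S_A|H_A)⁻¹ P_A`. -/
theorem duals_eq_parametrization {H K : Type*}
    [NormedAddCommGroup H] [InnerProductSpace ℂ H] [CompleteSpace H]
    [NormedAddCommGroup K] [InnerProductSpace ℂ K] [CompleteSpace K]
    {I : Type*} [Countable I] (TA : H →L[ℂ] lp (fun _ : I => K) 2)
    (HA : Submodule ℂ H) [CompleteSpace HA]
    (hHA : HA = (LinearMap.range (adjoint TA).toLinearMap).topologicalClosure)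
    (α : ℝ) (hα : 0 < α) (hframe : ∀ x ∈ HA, α * ‖x‖ ^ 2 ≤ ‖TA x‖ ^ 2)
    (G : H →L[ℂ] H)
    (hGran : ∀ x : H, G x ∈ HA)
    (hGinv : ∀ x : H, (adjoint TA) (TA (G x)) = proj HA x)
    (hGker : ∀ x ∈ HAᗮ, G x = 0) :
    {T : H →L[ℂ] lp (fun _ : I => K) 2 |
        (adjoint T).comp TA = proj HA ∧ ∀ y, adjoint T y ∈ HA} =
    {T : H →L[ℂ] lp (fun _ : I => K) 2 |
        ∃ L : HA →L[ℂ] lp (fun _ : I => K) 2,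
          (adjoint L).comp TA = 0 ∧
          T = TA.comp G + L.comp (Submodule.orthogonalProjectionOnto HA)} :=
  duals_eq_parametrization_general TA HA G hGinv hGker
end

section
/- Let A be a B(H,K)-valued frame for H with lower frame bound α, and let B be a μ-perturbation of A where μ < √α. Then B is an operator-valued frame for H, and the canonical duals satisfy ‖T_{Ã} - T_{B̃}‖ ≤ 2μ/(√α(√α - μ)), where T_{Ã} = T_A S_A^{-1} and T_{B̃} = T_B S_B^{-1}. -/
/-!
The canonical dual of a frame `T` is `T S⁻¹` with `S = T† T`. If `c ‖x‖ ≤ ‖T x‖` then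
`‖S⁻¹‖ ≤ c⁻²`, and the C*-identity gives `‖T S⁻¹‖² = ‖S⁻¹ S S⁻¹‖ ≤ c⁻²`. A `μ`-perturbation `B`
of `A` is bounded below by `c - μ`, and the algebraic identity
`T_A S_A⁻¹ - T_B S_B⁻¹ = (1 - P_B)(T_A - T_B) S_A⁻¹ + T_B S_B⁻¹ (T_B - T_A)† T_A S_A⁻¹`,
where `P_B = T_B S_B⁻¹ T_B†` is an orthogonal projection, bounds the difference of the duals by
`μ / c² + μ / (c (c - μ)) ≤ 2 μ / (c (c - μ))`.
-/

open ContinuousLinearMap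

namespace ContinuousLinearMap

section BoundedBelow

variable {𝕜 E F : Type*} [NontriviallyNormedField 𝕜]
  [SeminormedAddCommGroup E] [NormedSpace 𝕜 E] [SeminormedAddCommGroup F] [NormedSpace 𝕜 F]

lemma sub_mul_norm_le_of_norm_sub_le {A B : E →L[𝕜] F} {c μ : ℝ} (hA : ∀ x, c * ‖x‖ ≤ ‖A x‖)
    (hμ : ‖A - B‖ ≤ μ) (x : E) : (c - μ) * ‖x‖ ≤ ‖B x‖ := by
  have := (A - B).le_of_opNorm_le hμ x
  rw [sub_apply] at this
  linarith [hA x, norm_sub_norm_le (A x) (B x)]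

end BoundedBelow

section Frame

variable {𝕜 E F : Type*} [RCLike 𝕜]
  [NormedAddCommGroup E] [InnerProductSpace 𝕜 E] [CompleteSpace E]
  [NormedAddCommGroup F] [InnerProductSpace 𝕜 F] [CompleteSpace F]

noncomputable def frameOp (T : E →L[𝕜] F) : E →L[𝕜] E := adjoint T ∘L T

noncomputable def canonicalDual (T : E →L[𝕜] F) : E →L[𝕜] F := T ∘L Ring.inverse (frameOp T)

lemma re_inner_frameOp_apply_self (T : E →L[𝕜] F) (x : E) :
    RCLike.re (inner 𝕜 (frameOp T x) x) = ‖T x‖ ^ 2 :=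
  (apply_norm_sq_eq_inner_adjoint_left T x).symm

lemma isSelfAdjoint_frameOp (T : E →L[𝕜] F) : IsSelfAdjoint (frameOp T) := by
  simp [frameOp, IsSelfAdjoint, star_eq_adjoint, adjoint_comp]

variable {T : E →L[𝕜] F} {c : ℝ}

lemma mul_norm_le_norm_frameOp_apply (hc : 0 ≤ c) (hT : ∀ x, c * ‖x‖ ≤ ‖T x‖) (x : E) :
    c ^ 2 * ‖x‖ ≤ ‖frameOp T x‖ := by
  rcases (norm_nonneg x).eq_or_lt with hx | hx
  · simp [← hx]
  have hsq : (c * ‖x‖) ^ 2 ≤ ‖frameOp T x‖ * ‖x‖ :=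
    calc (c * ‖x‖) ^ 2 ≤ ‖T x‖ ^ 2 := pow_le_pow_left₀ (by positivity) (hT x) 2
      _ = RCLike.re (inner 𝕜 (frameOp T x) x) := (re_inner_frameOp_apply_self T x).symm
      _ ≤ ‖frameOp T x‖ * ‖x‖ := re_inner_le_norm _ _
  nlinarith

lemma isUnit_frameOp (hc : 0 < c) (hT : ∀ x, c * ‖x‖ ≤ ‖T x‖) : IsUnit (frameOp T) := by
  refine isUnit_of_forall_le_norm_inner_map _ (c := ⟨c ^ 2, by positivity⟩)
    (pow_pos hc 2) fun x ↦ ?_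
  calc ‖x‖ ^ 2 * c ^ 2 = (c * ‖x‖) ^ 2 := by ring
    _ ≤ ‖T x‖ ^ 2 := pow_le_pow_left₀ (by positivity) (hT x) 2
    _ = RCLike.re (inner 𝕜 (frameOp T x) x) := (re_inner_frameOp_apply_self T x).symm
    _ ≤ ‖inner 𝕜 (frameOp T x) x‖ := RCLike.re_le_norm _

lemma norm_inverse_frameOp_le (hc : 0 < c) (hT : ∀ x, c * ‖x‖ ≤ ‖T x‖) :
    ‖Ring.inverse (frameOp T)‖ ≤ (c ^ 2)⁻¹ := by
  refine opNorm_le_bound _ (by positivity) fun y ↦ ?_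
  have h := mul_norm_le_norm_frameOp_apply hc.le hT (Ring.inverse (frameOp T) y)
  rw [← mul_apply_eq_comp, Ring.mul_inverse_cancel _ (isUnit_frameOp hc hT),
    one_apply_eq_self] at h
  rw [inv_mul_eq_div, le_div_iff₀ (by positivity)]
  linarith

lemma norm_canonicalDual_le (hc : 0 < c) (hT : ∀ x, c * ‖x‖ ≤ ‖T x‖) :
    ‖canonicalDual T‖ ≤ c⁻¹ := by
  set R := Ring.inverse (frameOp T)
  have hR : adjoint R = R := (isSelfAdjoint_frameOp T).ringInverse
  have hsq : ‖canonicalDual T‖ ^ 2 = ‖R‖ := by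
    rw [sq, ← norm_adjoint_comp_self, canonicalDual, adjoint_comp, hR]
    congr 1
    calc R ∘L adjoint T ∘L T ∘L R = R * frameOp T * R := rfl
      _ = R := by rw [Ring.inverse_mul_cancel _ (isUnit_frameOp hc hT), one_mul]
  have := norm_inverse_frameOp_le hc hT
  rw [← hsq, ← inv_pow] at this
  exact le_of_pow_le_pow_left₀ two_ne_zero (by positivity) this

lemma isStarProjection_canonicalDual_comp_adjoint (hT : IsUnit (frameOp T)) :
    IsStarProjection (canonicalDual T ∘L adjoint T) := by
  set R := Ring.inverse (frameOp T)
  refine ⟨?_, ?_⟩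
  · change (T ∘L R ∘L adjoint T) ∘L T ∘L R ∘L adjoint T = T ∘L R ∘L adjoint T
    calc (T ∘L R ∘L adjoint T) ∘L T ∘L R ∘L adjoint T
        = T ∘L (R * frameOp T) ∘L R ∘L adjoint T := rfl
      _ = T ∘L R ∘L adjoint T := by rw [Ring.inverse_mul_cancel _ hT]; rfl
  · have hR : adjoint R = R := (isSelfAdjoint_frameOp T).ringInverse
    rw [IsSelfAdjoint, star_eq_adjoint, canonicalDual, adjoint_comp, adjoint_comp,
      adjoint_adjoint, hR]
    rfl

lemma norm_one_sub_canonicalDual_comp_adjoint_le (hT : IsUnit (frameOp T)) :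
    ‖1 - canonicalDual T ∘L adjoint T‖ ≤ 1 :=
  (isStarProjection_canonicalDual_comp_adjoint hT).one_sub.norm_le

lemma canonicalDual_sub_canonicalDual {A B : E →L[𝕜] F} (hA : IsUnit (frameOp A))
    (hB : IsUnit (frameOp B)) :
    canonicalDual A - canonicalDual B =
      (1 - canonicalDual B ∘L adjoint B) ∘L (A - B) ∘L Ring.inverse (frameOp A) +
        canonicalDual B ∘L adjoint (B - A) ∘L canonicalDual A := by
  have hA' (z : E) : adjoint A (A (Ring.inverse (frameOp A) z)) = z := by
    rw [← comp_apply, ← frameOp, ← mul_apply_eq_comp, Ring.mul_inverse_cancel _ hA,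
      one_apply_eq_self]
  have hB' (z : E) : Ring.inverse (frameOp B) (adjoint B (B z)) = z := by
    rw [← comp_apply (adjoint B), ← frameOp, ← mul_apply_eq_comp, Ring.inverse_mul_cancel _ hB,
      one_apply_eq_self]
  ext x
  simp only [canonicalDual, sub_apply, add_apply, comp_apply, one_apply_eq_self, map_sub, hA',
    hB']
  abel

lemma norm_canonicalDual_sub_le {A B : E →L[𝕜] F} {μ : ℝ} (hc : 0 < c)
    (hA : ∀ x, c * ‖x‖ ≤ ‖A x‖) (hμ : ‖A - B‖ ≤ μ) (hμc : μ < c) :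
    ‖canonicalDual A - canonicalDual B‖ ≤ 2 * μ / (c * (c - μ)) := by
  have hμ₀ : 0 ≤ μ := (norm_nonneg _).trans hμ
  have hcμ : 0 < c - μ := sub_pos.mpr hμc
  have hB := sub_mul_norm_le_of_norm_sub_le hA hμ
  have hBA : ‖adjoint (B - A)‖ ≤ μ := by rwa [LinearIsometryEquiv.norm_map, norm_sub_rev]
  have hP := norm_one_sub_canonicalDual_comp_adjoint_le (isUnit_frameOp hcμ hB)
  have hRA := norm_inverse_frameOp_le hc hA
  have hDA := norm_canonicalDual_le hc hA
  have hDB := norm_canonicalDual_le hcμ hB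
  rw [canonicalDual_sub_canonicalDual (isUnit_frameOp hc hA) (isUnit_frameOp hcμ hB)]
  calc _ ≤ ‖1 - canonicalDual B ∘L adjoint B‖ * (‖A - B‖ * ‖Ring.inverse (frameOp A)‖) +
          ‖canonicalDual B‖ * (‖adjoint (B - A)‖ * ‖canonicalDual A‖) := by
        refine (norm_add_le _ _).trans (add_le_add ?_ ?_) <;>
          exact (opNorm_comp_le _ _).trans (by gcongr; exact opNorm_comp_le _ _)
    _ ≤ 1 * (μ * (c ^ 2)⁻¹) + (c - μ)⁻¹ * (μ * c⁻¹) := by gcongr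
    _ ≤ μ / (c * (c - μ)) + μ / (c * (c - μ)) := by
        gcongr ?_ + ?_
        · rw [one_mul, ← div_eq_mul_inv]
          gcongr
          nlinarith
        · exact (by field_simp : (c - μ)⁻¹ * (μ * c⁻¹) = μ / (c * (c - μ))).le
    _ = 2 * μ / (c * (c - μ)) := by ring

end Frame

end ContinuousLinearMap

theorem canonical_duals_perturbation_general {H K : Type*}
    [NormedAddCommGroup H] [InnerProductSpace ℂ H] [CompleteSpace H]
    [NormedAddCommGroup K] [InnerProductSpace ℂ K] [CompleteSpace K]
    {I : Type*} (TA TB : H →L[ℂ] lp (fun _ : I => K) 2)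
    (α : ℝ)
    (hframe : ∀ x : H, α * ‖x‖ ^ 2 ≤ ‖TA x‖ ^ 2)
    (μ : ℝ) (hμ : ‖TA - TB‖ ≤ μ) (hμα : μ < Real.sqrt α) :
    (∃ α' > 0, ∀ x : H, α' * ‖x‖ ^ 2 ≤ ‖TB x‖ ^ 2) ∧
    ‖TA.comp (Ring.inverse ((adjoint TA).comp TA)) -
        TB.comp (Ring.inverse ((adjoint TB).comp TB))‖ ≤
      2 * μ / (Real.sqrt α * (Real.sqrt α - μ)) := by
  have hc : 0 < Real.sqrt α := ((opNorm_nonneg _).trans hμ).trans_lt hμα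
  have hA (x : H) : Real.sqrt α * ‖x‖ ≤ ‖TA x‖ := by
    refine (pow_le_pow_iff_left₀ (by positivity) (norm_nonneg _) two_ne_zero).mp ?_
    rw [mul_pow, Real.sq_sqrt (Real.sqrt_pos.mp hc).le]
    exact hframe x
  have hcμ : 0 < Real.sqrt α - μ := sub_pos.mpr hμα
  refine ⟨⟨(Real.sqrt α - μ) ^ 2, pow_pos hcμ 2, fun x ↦ ?_⟩,
    norm_canonicalDual_sub_le hc hA hμ hμα⟩
  rw [← mul_pow]
  exact pow_le_pow_left₀ (mul_nonneg hcμ.le (norm_nonneg x))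
    (sub_mul_norm_le_of_norm_sub_le hA hμ x) 2

/-- Let `A` be an operator-valued frame for `H` with lower frame bound `α` and `B` a
`μ`-perturbation of `A`, `μ < √α`. Then `B` is an operator-valued frame for `H` and the
canonical duals satisfy `‖T_A S_A⁻¹ - T_B S_B⁻¹‖ ≤ 2μ/(√α(√α - μ))`. -/
theorem canonical_duals_perturbation {H K : Type*}
    [NormedAddCommGroup H] [InnerProductSpace ℂ H] [CompleteSpace H]
    [NormedAddCommGroup K] [InnerProductSpace ℂ K] [CompleteSpace K]
    {I : Type*} [Countable I] (TA TB : H →L[ℂ] lp (fun _ : I => K) 2)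
    (α : ℝ) (hα : 0 < α)
    (hframe : ∀ x : H, α * ‖x‖ ^ 2 ≤ ‖TA x‖ ^ 2)
    (μ : ℝ) (hμ : ‖TA - TB‖ ≤ μ) (hμα : μ < Real.sqrt α) :
    (∃ α' > 0, ∀ x : H, α' * ‖x‖ ^ 2 ≤ ‖TB x‖ ^ 2) ∧
    ‖TA.comp (Ring.inverse ((adjoint TA).comp TA)) -
        TB.comp (Ring.inverse ((adjoint TB).comp TB))‖ ≤
      2 * μ / (Real.sqrt α * (Real.sqrt α - μ)) :=
  canonical_duals_perturbation_general TA TB α hframe μ hμ hμα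
end
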